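/- arXiv:2508.13967 — 4 statements merged into one kernel-verified Lean document; each statement's English description precedes it below -/
import Mathlib

section
/- In a DAG, two nodes i and j are d-separated given some conditioning set K if and only if they are *-separated given some conditioning set K', if and only if i and j are non-adjacent. -/
/-! If `i` and `j` are adjacent, the edge between them is a *-connecting path for every
conditioning set. Otherwise condition on `K = An({i, j}) \ {i, j}`. On a d-connecting path
every collider is an ancestor of `i` or `j`, and walking forward from a non-collider along the
path one reaches `j` or a collider; hence every interior vertex is an ancestor of `i` or `j`,
so lies in `K` and must be a collider. The second vertex `b` is then a collider, so `i → b` and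
`b` is an ancestor of `j`; the third vertex `c → b` is an ancestor of `j` as well, hence
interior, hence a collider, so `b → c`: a cycle. -/

variable {V : Type*}

/-- Undirected adjacency in a digraph given by edge relation `E`. -/
def Adjd (E : V → V → Prop) (i j : V) : Prop := E i j ∨ E j i

/-- Parents of a node. -/
def pa (E : V → V → Prop) (j : V) : Set V := {u | E u j}

/-- A directed path from `i` to `j`, as a nonrepeating list of consecutive vertices. -/
def IsDirPath (E : V → V → Prop) (p : List V) (i j : V) : Prop :=
  p.Chain' E ∧ p.head? = some i ∧ p.getLast? = some j ∧ p.Nodup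

/-- An undirected path from `i` to `j`. -/
def IsUndirPath (E : V → V → Prop) (p : List V) (i j : V) : Prop :=
  p.Chain' (Adjd E) ∧ p.head? = some i ∧ p.getLast? = some j ∧ p.Nodup

/-- Interior (non-endpoint) vertices of a path. -/
def interiorL (p : List V) : List V := (p.drop 1).dropLast

/-- `k` is a collider on the path `p`: both path-edges at `k` point into `k`. -/
def IsColliderOn (E : V → V → Prop) (p : List V) (k : V) : Prop :=
  ∃ (l₁ l₂ : List V) (a b : V), p = l₁ ++ a :: k :: b :: l₂ ∧ E a k ∧ E b k

/-- A digraph is acyclic if it has no directed cycles. -/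
def Acyclic (E : V → V → Prop) : Prop := ∀ i, ¬ Relation.TransGen E i i

/-- `k ∈ An(K)`: `k` lies in `K` or is an ancestor of a member of `K`. -/
def InAn (E : V → V → Prop) (K : Set V) (k : V) : Prop :=
  k ∈ K ∨ ∃ m ∈ K, Relation.TransGen E k m

/-- The path `p` is d-connecting between `i` and `j` given `K`. -/
def DConnecting (E : V → V → Prop) (K : Set V) (p : List V) (i j : V) : Prop :=
  IsUndirPath E p i j ∧
  (∀ k, IsColliderOn E p k → InAn E K k) ∧
  (∀ k, k ∈ interiorL p → ¬ IsColliderOn E p k → k ∉ K)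

/-- d-separation of `i` and `j` given `K`. -/
def DSep (E : V → V → Prop) (K : Set V) (i j : V) : Prop :=
  ¬ ∃ p, DConnecting E K p i j

/-- The path `p` is *-connecting: d-connecting with at most one collider. -/
def StarConnecting (E : V → V → Prop) (K : Set V) (p : List V) (i j : V) : Prop :=
  DConnecting E K p i j ∧
  ∀ k₁ k₂, IsColliderOn E p k₁ → IsColliderOn E p k₂ → k₁ = k₂

/-- *-separation of `i` and `j` given `K`. -/
def StarSep (E : V → V → Prop) (K : Set V) (i j : V) : Prop :=
  ¬ ∃ p, StarConnecting E K p i j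

/-- The weight of a directed path: product of its edge weights. -/
def pathWeight (C : V → V → ℝ) (p : List V) : ℝ :=
  ((p.zip p.tail).map fun q => C q.1 q.2).prod

/-- A critical (maximum-weight) directed path from `i` to `j`. -/
def IsCritical (E : V → V → Prop) (C : V → V → ℝ) (p : List V) (i j : V) : Prop :=
  IsDirPath E p i j ∧ 2 ≤ p.length ∧
  ∀ q, IsDirPath E q i j → 2 ≤ q.length → pathWeight C q ≤ pathWeight C p

/-- Genericity of the weights: critical paths are unique when they exist. -/
def Generic (E : V → V → Prop) (C : V → V → ℝ) : Prop :=
  ∀ i j p q, IsCritical E C p i j → IsCritical E C q i j → p = q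

/-- Positivity of the edge weights. -/
def PosWeights (E : V → V → Prop) (C : V → V → ℝ) : Prop :=
  ∀ a b, E a b → 0 < C a b

/-- Edge of the weighted transitive reduction `G^tr_C`: the edge `i → j` is present in `G`
and every other directed `i`-`j` path has strictly smaller weight. -/
def TrEdge (E : V → V → Prop) (C : V → V → ℝ) (i j : V) : Prop :=
  E i j ∧ ∀ q, IsDirPath E q i j → 2 ≤ q.length → q ≠ [i, j] → pathWeight C q < C i j

/-- A path factors through `K` (relative to endpoints `i`,`j`). -/
def FactorsThrough (p : List V) (K : Set V) (i j : V) : Prop :=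
  ∃ k ∈ interiorL p, k ∈ K ∧ k ≠ i ∧ k ≠ j

/-- Edge of the critical DAG `G*_K(C)`. -/
def CritEdge (E : V → V → Prop) (C : V → V → ℝ) (K : Set V) (i j : V) : Prop :=
  (∃ p, IsDirPath E p i j ∧ 2 ≤ p.length) ∧
  ∀ p, IsCritical E C p i j → ¬ FactorsThrough p K i j

/-- `i` and `j` are C*-connected given `K`: one of the five types of connecting
paths exists in the critical DAG `G*_K(C)`. -/
def CStarConnected (E : V → V → Prop) (C : V → V → ℝ) (K : Set V) (i j : V) : Prop :=
  (CritEdge E C K i j ∨ CritEdge E C K j i) ∨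
  (∃ p, p ∉ K ∧ CritEdge E C K p i ∧ CritEdge E C K p j) ∨
  (∃ l ∈ K, CritEdge E C K i l ∧ CritEdge E C K j l) ∨
  (∃ p, ∃ l ∈ K, p ∉ K ∧ CritEdge E C K p i ∧ CritEdge E C K p l ∧ CritEdge E C K j l) ∨
  (∃ p, ∃ l ∈ K, p ∉ K ∧ CritEdge E C K p j ∧ CritEdge E C K p l ∧ CritEdge E C K i l) ∨
  (∃ p q, ∃ l ∈ K, p ∉ K ∧ q ∉ K ∧ CritEdge E C K p i ∧ CritEdge E C K p l ∧
    CritEdge E C K q l ∧ CritEdge E C K q j)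

/-- C*-separation of `i` and `j` given `K`. -/
def CStarSep (E : V → V → Prop) (C : V → V → ℝ) (K : Set V) (i j : V) : Prop :=
  ¬ CStarConnected E C K i j

/-- `b` immediately follows `a` in the cyclic order given by the list `p`. -/
def CycConsec (p : List V) (a b : V) : Prop :=
  ∃ t : Fin p.length, p.get t = a ∧
    p.get ⟨(t.val + 1) % p.length, Nat.mod_lt _ t.pos⟩ = b

/-- The list `p` enumerates, in cyclic order, an induced subgraph of the digraph `E`
which is (as an undirected graph) a simple cycle. -/
def IsInducedCycleList (E : V → V → Prop) (p : List V) : Prop :=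
  p.Nodup ∧ 3 ≤ p.length ∧
  ∀ a ∈ p, ∀ b ∈ p, (Adjd E a b ↔ (CycConsec p a b ∨ CycConsec p b a))

/-- `k` is a collider of the induced cycle `p`: both incident cycle edges point into `k`. -/
def CycCollider (E : V → V → Prop) (p : List V) (k : V) : Prop :=
  ∃ a b, a ≠ b ∧ CycConsec p a k ∧ CycConsec p k b ∧ E a k ∧ E b k

section

variable {E : V → V → Prop}

theorem IsColliderOn.cons {p : List V} {c : V} (x : V) (h : IsColliderOn E p c) :
    IsColliderOn E (x :: p) c := by
  obtain ⟨l₁, l₂, a, b, rfl, hak, hbk⟩ := h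
  exact ⟨x :: l₁, l₂, a, b, rfl, hak, hbk⟩

theorem not_isColliderOn_pair {x y c : V} : ¬ IsColliderOn E [x, y] c := by
  rintro ⟨l₁, l₂, a, b, h, -, -⟩
  have := congrArg List.length h
  simp at this
  omega

theorem List.Nodup.eq_of_append_cons_eq {l₁ l₂ r₁ r₂ : List V} {y : V}
    (hnd : (l₁ ++ y :: r₁).Nodup) (h : l₁ ++ y :: r₁ = l₂ ++ y :: r₂) :
    l₁ = l₂ ∧ r₁ = r₂ := by
  classical
  have hl₁ : y ∉ l₁ := fun hy => (List.nodup_middle.mp hnd |> List.nodup_cons.mp).1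
    (List.mem_append_left _ hy)
  have hl₂ : y ∉ l₂ := fun hy => (List.nodup_middle.mp (h ▸ hnd) |> List.nodup_cons.mp).1
    (List.mem_append_left _ hy)
  have hlen : l₁.length = l₂.length := by
    have := congrArg (List.idxOf y) h
    simpa [List.idxOf_append_of_notMem hl₁, List.idxOf_append_of_notMem hl₂] using this
  obtain ⟨h₁, h₂⟩ := List.append_inj h hlen
  exact ⟨h₁, List.cons_injective h₂⟩

theorem isColliderOn_iff_of_nodup {l₁ l₂ : List V} {a k b : V}
    (hnd : (l₁ ++ a :: k :: b :: l₂).Nodup) :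
    IsColliderOn E (l₁ ++ a :: k :: b :: l₂) k ↔ E a k ∧ E b k := by
  refine ⟨fun ⟨m₁, m₂, a', b', hp, hak, hbk⟩ => ?_, fun h => ⟨l₁, l₂, a, b, rfl, h⟩⟩
  have hsplit : (l₁ ++ [a]) ++ k :: b :: l₂ = (m₁ ++ [a']) ++ k :: b' :: m₂ := by simpa using hp
  obtain ⟨hpre, hsuf⟩ := List.Nodup.eq_of_append_cons_eq (by simpa using hnd) hsplit
  obtain rfl : a = a' := (List.append_inj' hpre rfl).2 |> List.singleton_injective
  obtain rfl : b = b' := (List.cons.inj hsuf).1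
  exact ⟨hak, hbk⟩

theorem transGen_getLast_or_collider {j : V} :
    ∀ {x y : V} {r : List V}, (x :: y :: r).IsChain (Adjd E) → E x y →
      (x :: y :: r).getLast? = some j →
      Relation.TransGen E x j ∨ ∃ c, IsColliderOn E (x :: y :: r) c ∧ Relation.TransGen E x c
  | x, y, [], _, hxy, hlast => by
    obtain rfl : y = j := by simpa using hlast
    exact .inl (.single hxy)
  | x, y, z :: r, hch, hxy, hlast => by
    obtain ⟨-, hch'⟩ := List.isChain_cons_cons.mp hch
    rcases (List.isChain_cons_cons.mp hch').1 with hyz | hzy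
    · rcases transGen_getLast_or_collider hch' hyz (by simpa using hlast) with h | ⟨c, hc, hyc⟩
      · exact .inl (.head hxy h)
      · exact .inr ⟨c, hc.cons x, .head hxy hyc⟩
    · exact .inr ⟨y, ⟨[], r, x, z, rfl, hxy, hzy⟩, .single hxy⟩

theorem IsUndirPath.exists_eq_cons_cons_cons {p : List V} {i j : V} (hp : IsUndirPath E p i j)
    (hij : i ≠ j) (hnadj : ¬ Adjd E i j) : ∃ b c r, p = i :: b :: c :: r := by
  obtain ⟨hch, hhead, hlast, -⟩ := hp
  rcases p with _ | ⟨a, _ | ⟨b, _ | ⟨c, r⟩⟩⟩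
  · simp at hhead
  · simp only [List.head?_cons, List.getLast?_singleton, Option.some.injEq] at hhead hlast
    exact absurd (hhead.symm.trans hlast) hij
  · simp only [List.head?_cons, List.getLast?_cons_cons, List.getLast?_singleton,
      Option.some.injEq] at hhead hlast
    subst hhead hlast
    exact absurd (List.isChain_cons_cons.mp hch).1 hnadj
  · exact ⟨b, c, r, by simpa using hhead⟩

def properAncestors (E : V → V → Prop) (i j : V) : Set V :=
  {v | v ≠ i ∧ v ≠ j ∧ (Relation.TransGen E v i ∨ Relation.TransGen E v j)}

theorem dsep_properAncestors (hA : Acyclic E) {i j : V} (hij : i ≠ j) (hnadj : ¬ Adjd E i j) :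
    DSep E (properAncestors E i j) i j := by
  rintro ⟨p, hpath, hC, hN⟩
  obtain ⟨b, c, r, rfl⟩ := hpath.exists_eq_cons_cons_cons hij hnadj
  obtain ⟨hch, -, hlast, hnd⟩ := hpath
  have hcoll : ∀ v, IsColliderOn E (i :: b :: c :: r) v →
      Relation.TransGen E v i ∨ Relation.TransGen E v j := by
    intro v hv
    rcases hC v hv with ⟨-, -, h⟩ | ⟨m, ⟨-, -, hm⟩, hvm⟩
    · exact h
    · exact hm.imp hvm.trans hvm.trans
  obtain ⟨hib_adj, hch⟩ := List.isChain_cons_cons.mp hch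
  have hbi : b ≠ i := by rintro rfl; simp at hnd
  have hbj : b ≠ j := by
    rintro rfl
    simp only [List.getLast?_cons_cons] at hlast
    exact (List.nodup_cons.mp (List.nodup_cons.mp hnd).2).1 (List.mem_of_getLast? hlast)
  have hb_coll : IsColliderOn E (i :: b :: c :: r) b := by
    by_contra hnc
    refine hN b (by simp [interiorL]) hnc ⟨hbi, hbj, ?_⟩
    rcases hib_adj with hib | hbi'
    · have hbc : E b c := (List.isChain_cons_cons.mp hch).1.resolve_right fun hcb =>
        hnc ((isColliderOn_iff_of_nodup (l₁ := []) hnd).mpr ⟨hib, hcb⟩)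
      rcases transGen_getLast_or_collider hch hbc (by simpa using hlast) with h | ⟨v, hv, hbv⟩
      · exact .inr h
      · exact (hcoll v (hv.cons i)).imp hbv.trans hbv.trans
    · exact .inl (.single hbi')
  obtain ⟨hib, hcb⟩ := (isColliderOn_iff_of_nodup (l₁ := []) hnd).mp hb_coll
  have hbj' : Relation.TransGen E b j := (hcoll b hb_coll).resolve_left fun h => hA i (.head hib h)
  have hcj : Relation.TransGen E c j := .head hcb hbj'
  obtain ⟨w, r, rfl⟩ : ∃ w r', r = w :: r' := by
    rcases r with _ | ⟨w, r⟩
    · obtain rfl : c = j := by simpa using hlast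
      exact absurd hcj (hA c)
    · exact ⟨w, r, rfl⟩
  have hci : c ≠ i := by rintro rfl; simp at hnd
  have hc_coll : IsColliderOn E (i :: b :: c :: w :: r) c := by
    by_contra hnc
    exact hN c (by simp [interiorL]) hnc ⟨hci, fun h => hA j (h ▸ hcj), .inr hcj⟩
  exact hA b (.head ((isColliderOn_iff_of_nodup (l₁ := [i]) hnd).mp hc_coll).1 (.single hcb))

theorem DSep.starSep {K : Set V} {i j : V} (h : DSep E K i j) : StarSep E K i j :=
  fun ⟨p, hp, _⟩ => h ⟨p, hp⟩

theorem starConnecting_pair {K : Set V} {i j : V} (hij : i ≠ j) (hadj : Adjd E i j) :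
    StarConnecting E K [i, j] i j :=
  ⟨⟨⟨List.isChain_pair.mpr hadj, rfl, rfl, by simpa using hij⟩,
    fun _ h => absurd h not_isColliderOn_pair, fun _ h => by simp [interiorL] at h⟩,
    fun _ _ h => absurd h not_isColliderOn_pair⟩

end

/-- In a DAG, two nodes `i` and `j` are d-separated given some conditioning
set `K` iff they are *-separated given some conditioning set `K'`, iff they are
non-adjacent. -/
theorem dsep_iff_starsep_iff_nonadjacent
    (E : V → V → Prop) (hA : Acyclic E) (i j : V) (hij : i ≠ j) :
    ((∃ K : Set V, i ∉ K ∧ j ∉ K ∧ DSep E K i j) ↔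
      (∃ K' : Set V, i ∉ K' ∧ j ∉ K' ∧ StarSep E K' i j)) ∧
    ((∃ K' : Set V, i ∉ K' ∧ j ∉ K' ∧ StarSep E K' i j) ↔ ¬ Adjd E i j) := by
  have hdsep (hnadj : ¬ Adjd E i j) : ∃ K : Set V, i ∉ K ∧ j ∉ K ∧ DSep E K i j :=
    ⟨_, fun h => h.1 rfl, fun h => h.2.1 rfl, dsep_properAncestors hA hij hnadj⟩
  have hstar : (∃ K' : Set V, i ∉ K' ∧ j ∉ K' ∧ StarSep E K' i j) ↔ ¬ Adjd E i j := by
    refine ⟨fun ⟨_, _, _, hK⟩ hadj => hK ⟨[i, j], starConnecting_pair hij hadj⟩, fun hnadj => ?_⟩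
    obtain ⟨K, hi, hj, hK⟩ := hdsep hnadj
    exact ⟨K, hi, hj, hK.starSep⟩
  exact ⟨⟨fun ⟨K, hi, hj, hK⟩ => ⟨K, hi, hj, hK.starSep⟩, fun h => hdsep (hstar.mp h)⟩, hstar⟩
end

section
/- If i and j are non-adjacent nodes in a DAG G, then either i and j are *-separated given pa(j), or i and j are *-separated given pa(i), where pa(v) denotes the set of parents of v. -/
variable {V : Type*}

/-!
If `j` is not an ancestor of `i`, then no path between `j` and `i` is d-connecting given `pa j`,
because such a path would have to be directed from `j` to `i`. Indeed, its first edge cannot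
point into `j`: the neighbour would be a parent of `j` that is either `i` (which is not adjacent
to `j`) or a non-collider in the conditioning set, or a collider forming a 2-cycle with `j`.
And the first edge that points backwards creates a collider that is a descendant of `j` and an
ancestor of `pa j`, closing a directed cycle. In a DAG, `i` and `j` cannot both be ancestors of
each other, so one of the two separations holds.
-/

namespace List

variable {α : Type*} {R : α → α → Prop}

theorem exists_append_cons_cons_of_not_isChain {l : List α} (h : ¬ l.IsChain R) :
    ∃ l₁ a b l₂, l = l₁ ++ a :: b :: l₂ ∧ (l₁ ++ [a]).IsChain R ∧ ¬ R a b := by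
  induction l with
  | nil => exact absurd .nil h
  | cons x t ih =>
    rcases t with _ | ⟨y, t⟩
    · exact absurd (.singleton x) h
    by_cases hxy : R x y
    · obtain ⟨l₁, a, b, l₂, hyt, hpre, hab⟩ :=
        ih fun ht => h (isChain_cons_cons.2 ⟨hxy, ht⟩)
      refine ⟨x :: l₁, a, b, l₂, by simp [hyt], hpre.cons ?_, hab⟩
      rcases l₁ with _ | ⟨z, l₁⟩ <;> simp_all
    · exact ⟨[], x, y, t, rfl, .singleton x, hxy⟩

theorem IsChain.reflTransGen {l : List α} {x y : α} (h : l.IsChain R) (hx : l.head? = some x)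
    (hy : l.getLast? = some y) : Relation.ReflTransGen R x y := by
  obtain ⟨t, rfl⟩ := head?_eq_some_iff.1 hx
  exact relationReflTransGen_of_exists_isChain_cons t h
    (by simpa [getLast?_eq_some_getLast] using hy)

end List

section

variable {E : V → V → Prop}

theorem Acyclic.eq_of_reflTransGen (hA : Acyclic E) {a b : V} (hab : Relation.ReflTransGen E a b)
    (hba : Relation.ReflTransGen E b a) : a = b := by
  rcases Relation.reflTransGen_iff_eq_or_transGen.1 hab with h | h
  · exact h.symm
  · exact absurd (h.trans_left hba) (hA a)

theorem IsColliderOn.reverse {p : List V} {k : V} (h : IsColliderOn E p k) :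
    IsColliderOn E p.reverse k := by
  obtain ⟨l₁, l₂, a, b, rfl, ha, hb⟩ := h
  exact ⟨l₂.reverse, l₁.reverse, b, a, by simp, hb, ha⟩

theorem interiorL_reverse (p : List V) : interiorL p.reverse = (interiorL p).reverse := by
  simp only [interiorL, List.drop_one, List.tail_reverse, List.dropLast_reverse]
  rw [List.tail_dropLast]

theorem DConnecting.reverse {K : Set V} {p : List V} {i j : V} (h : DConnecting E K p i j) :
    DConnecting E K p.reverse j i := by
  obtain ⟨⟨hc, hh, hl, hnd⟩, hcol, hnon⟩ := h
  refine ⟨⟨List.isChain_reverse.2 (hc.imp fun _ _ => Or.symm), by simpa using hl,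
    by simpa using hh, List.nodup_reverse.2 hnd⟩, fun k hk => ?_, fun k hk hnc => ?_⟩
  · simpa using hcol k (by simpa using hk.reverse)
  · rw [interiorL_reverse, List.mem_reverse] at hk
    exact hnon k hk fun hcl => hnc hcl.reverse

theorem IsColliderOn.rel_of_nodup {p l₁ l₂ : List V} {a k : V} (hk : IsColliderOn E p k)
    (hp : p.Nodup) (h : p = l₁ ++ a :: k :: l₂) : E a k := by
  obtain ⟨m₁, m₂, x, y, rfl, hxk, -⟩ := hk
  have hk : k ∉ m₁ ++ [x] ++ y :: m₂ := by
    have hmid : (m₁ ++ [x] ++ k :: y :: m₂).Nodup := by simpa using hp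
    exact (List.nodup_cons.1 (List.nodup_middle.1 hmid)).1
  rw [List.mem_append, not_or] at hk
  obtain ⟨hpre, -, -⟩ := (List.append_cons_inj_of_notMem hk.1 hk.2).1
    (by simpa using h : m₁ ++ [x] ++ k :: y :: m₂ = l₁ ++ [a] ++ k :: l₂)
  obtain rfl : x = a := by simpa using (List.append_inj' hpre rfl).2
  exact hxk

theorem DConnecting.reflTransGen_of_pa (hA : Acyclic E) {p : List V} {i j : V} (hij : ¬ E i j)
    (hp : DConnecting E (pa E j) p j i) : Relation.ReflTransGen E j i := by
  obtain ⟨⟨hadj, hhead, hlast, hnd⟩, hcol, hnon⟩ := hp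
  refine List.IsChain.reflTransGen (l := p) ?_ hhead hlast
  by_contra hne
  obtain ⟨l₁, a, b, l₂, rfl, hpre, hab⟩ := List.exists_append_cons_cons_of_not_isChain hne
  have hba : E b a := ((List.isChain_append_cons_cons.1 hadj).2.1).resolve_left hab
  rcases l₁.eq_nil_or_concat with rfl | ⟨l₁, c, rfl⟩
  · obtain rfl : a = j := by simpa using hhead
    rcases l₂ with _ | ⟨d, l₂⟩
    · obtain rfl : b = i := by simpa using hlast
      exact hij hba
    · have hcoll : IsColliderOn E (a :: b :: d :: l₂) b := by
        by_contra hnc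
        exact hnon b (by simp [interiorL]) hnc hba
      exact hA a (.head (hcoll.rel_of_nodup hnd (l₁ := []) rfl) (.single hba))
  · have hca : E c a := (List.isChain_append.1 hpre).2.2 c (by simp) a rfl
    have haj : Relation.TransGen E a j := by
      rcases hcol a ⟨l₁, l₂, c, b, by simp, hca, hba⟩ with h | ⟨m, hm, h⟩
      · exact .single h
      · exact h.tail hm
    have hja : Relation.ReflTransGen E j a := hpre.reflTransGen (by simpa using hhead) (by simp)
    exact hA j (haj.trans_right hja)

end

/-- If `i` and `j` are non-adjacent nodes in a DAG, then either they are
*-separated given `pa j`, or they are *-separated given `pa i`. -/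
theorem starsep_given_parents
    (E : V → V → Prop) (hA : Acyclic E) (i j : V) (hij : i ≠ j)
    (hnadj : ¬ Adjd E i j) :
    StarSep E (pa E j) i j ∨ StarSep E (pa E i) i j := by
  by_cases hji : Relation.ReflTransGen E j i
  · right
    rintro ⟨p, hp, -⟩
    exact hij (hA.eq_of_reflTransGen (hp.reflTransGen_of_pa hA fun h => hnadj (.inr h)) hji)
  · left
    rintro ⟨p, hp, -⟩
    exact hji (hp.reverse.reflTransGen_of_pa hA fun h => hnadj (.inl h))
end

section
/- Let G be a DAG and suppose an i-j path π is d-connecting given pa(i) and contains exactly one collider whose middle node is k, where the portion of π from i to the collider is a directed path out of i. Then k ∈ An(pa(i)) implies G contains a directed cycle; hence in a DAG no such path exists. -/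
variable {V : Type*}

/-! The collider `k` of a d-connecting path lies in `An(pa i)`, so `k` reaches `i`; the directed
segment of the path from `i` to `k` closes this into a directed cycle through `i`. -/

theorem transGen_of_isChain_append_pair {E : V → V → Prop} {l : List V} {x a y : V}
    (hc : (l ++ [a, y]).IsChain E) (hx : (l ++ [a]).head? = some x) :
    Relation.TransGen E x y := by
  obtain ⟨hla, hay, -⟩ := List.isChain_append_cons_cons.1 hc
  have hxa := List.relationReflTransGen_of_exists_isChain _ hla (by simp)
  rw [List.getLast_append_singleton, (List.head_eq_iff_head?_eq_some _).2 hx] at hxa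
  exact .tail' hxa hay

theorem InAn.transGen_pa {E : V → V → Prop} {i k : V} (h : InAn E (pa E i) k) :
    Relation.TransGen E k i := by
  rcases h with hki | ⟨m, hmi, hkm⟩
  · exact .single hki
  · exact hkm.tail hmi

theorem unique_collider_ancestor_cycle_general
    (E : V → V → Prop) (i j k : V) (p l₁ l₂ : List V) (a b : V)
    (hp : p = l₁ ++ a :: k :: b :: l₂)
    (hdc : DConnecting E (pa E i) p i j)
    (hak : E a k) (hbk : E b k)
    (hdir : (l₁ ++ [a, k]).Chain' E) :
    (InAn E (pa E i) k → ∃ m, Relation.TransGen E m m) ∧ (Acyclic E → False) := by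
  have hki : Relation.TransGen E k i :=
    InAn.transGen_pa (hdc.2.1 k ⟨l₁, l₂, a, b, hp, hak, hbk⟩)
  have hhead : (l₁ ++ [a]).head? = some i := by
    simpa [hp, List.head?_append] using hdc.1.2.1
  have hcyc : Relation.TransGen E i i := (transGen_of_isChain_append_pair hdir hhead).trans hki
  exact ⟨fun _ => ⟨i, hcyc⟩, fun hA => hA i hcyc⟩

/-- If an `i`-`j` path `π` is d-connecting given `pa i`, contains exactly one
collider with middle node `k`, and the portion of `π` from `i` to the collider is a
directed path out of `i`, then `k ∈ An(pa i)` implies a directed cycle exists; hence in a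
DAG no such path exists. -/
theorem unique_collider_ancestor_cycle
    (E : V → V → Prop) (i j k : V) (p l₁ l₂ : List V) (a b : V)
    (hp : p = l₁ ++ a :: k :: b :: l₂)
    (hdc : DConnecting E (pa E i) p i j)
    (hak : E a k) (hbk : E b k)
    (huniq : ∀ k', IsColliderOn E p k' → k' = k)
    (hdir : (l₁ ++ [a, k]).Chain' E) :
    (InAn E (pa E i) k → ∃ m, Relation.TransGen E m m) ∧ (Acyclic E → False) :=
  unique_collider_ancestor_cycle_general E i j k p l₁ l₂ a b hp hdc hak hbk hdir
end

section
/- Let (G,C) be a weighted DAG. If i and j are C*-separated given pa(j) in (G,C), then the edge i → j is not in the weighted transitive reduction G^tr_C. -/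
variable {V : Type*}

/-! An edge `i → j` of `G^tr_C` is the unique critical `i`-`j` path, and a path with no interior
vertices factors through no set, so the edge survives in the critical DAG `G*_K(C)` for every `K`.
For `K = pa j` this is a connecting path of the first type. -/

section CriticalDAG

variable {E : V → V → Prop} {C : V → V → ℝ} {i j : V}

theorem Acyclic.ne_of_edge (hA : Acyclic E) (h : E i j) : i ≠ j := by
  rintro rfl
  exact hA i (.single h)

theorem isDirPath_pair (h : E i j) (hne : i ≠ j) : IsDirPath E [i, j] i j :=
  ⟨List.isChain_pair.mpr h, rfl, rfl, by simpa using hne⟩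

theorem pathWeight_pair : pathWeight C [i, j] = C i j := by
  simp [pathWeight]

theorem not_factorsThrough_pair (K : Set V) : ¬ FactorsThrough [i, j] K i j := by
  rintro ⟨k, hk, -⟩
  simp [interiorL] at hk

theorem TrEdge.eq_of_isCritical (h : TrEdge E C i j) (hne : i ≠ j) {p : List V}
    (hp : IsCritical E C p i j) : p = [i, j] := by
  obtain ⟨hpath, hlen, hmax⟩ := hp
  by_contra hp
  have hlt : pathWeight C p < C i j := h.2 p hpath hlen hp
  have hle : C i j ≤ pathWeight C p := by
    simpa only [pathWeight_pair] using hmax [i, j] (isDirPath_pair h.1 hne) le_rfl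
  exact hlt.not_ge hle

theorem TrEdge.critEdge (h : TrEdge E C i j) (hne : i ≠ j) (K : Set V) :
    CritEdge E C K i j := by
  refine ⟨⟨[i, j], isDirPath_pair h.1 hne, le_rfl⟩, fun p hp => ?_⟩
  rw [h.eq_of_isCritical hne hp]
  exact not_factorsThrough_pair K

end CriticalDAG

theorem cstarsep_given_parents_not_trEdge_general
    (E : V → V → Prop) (C : V → V → ℝ) (hA : Acyclic E)
    (i j : V) (hsep : CStarSep E C (pa E j) i j) :
    ¬ TrEdge E C i j := fun h =>
  hsep (.inl (.inl (h.critEdge (hA.ne_of_edge h.1) (pa E j))))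

/-- If `i` and `j` are C*-separated given `pa j` in a weighted DAG `(G,C)`,
then the edge `i → j` is not in the weighted transitive reduction `G^tr_C`. -/
theorem cstarsep_given_parents_not_trEdge
    (E : V → V → Prop) (C : V → V → ℝ) (hA : Acyclic E) (hpos : PosWeights E C)
    (i j : V) (hsep : CStarSep E C (pa E j) i j) :
    ¬ TrEdge E C i j :=
  cstarsep_given_parents_not_trEdge_general E C hA i j hsep
end
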